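/- arXiv:1405.2714 — 3 statements merged into one kernel-verified Lean document; each statement's English description precedes it below -/
import Mathlib

section
/- For any distinct indices j, k ∈ {1,2,3}, any R > 0, and any ω ∈ ℝ satisfying ω² = 1/R³ + (3 − 9 I_j)/(2R⁵), the pair (R e_j, ω e_k) is a relative equilibrium pair of the second-order model (an orthogonal equilibrium). -/
noncomputable section

open Real

/-- The Euclidean dot product on `ℝ³`. -/
def dot3 (u v : Fin 3 → ℝ) : ℝ := u 0 * v 0 + u 1 * v 1 + u 2 * v 2

/-- The Euclidean norm on `ℝ³`. -/
def norm3 (u : Fin 3 → ℝ) : ℝ := Real.sqrt (dot3 u u)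

/-- The `j`-th standard basis vector of `ℝ³`. -/
def e3 (j : Fin 3) : Fin 3 → ℝ := fun i => if i = j then 1 else 0

/-- The inertia tensor `diag (I₁, I₂, I₃)` applied to a vector. -/
def inertiaApply (I₁ I₂ I₃ : ℝ) (v : Fin 3 → ℝ) : Fin 3 → ℝ :=
  ![I₁ * v 0, I₂ * v 1, I₃ * v 2]

/-- The gradient of the second-order gravitational potential:
`∇V₂(𝐑) = 𝐑/R³ + 3𝐑/(2R⁵) + 3𝐈𝐑/R⁵ − 15(𝐑·𝐈𝐑)𝐑/(2R⁷)` with `R = |𝐑|`. -/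
def gradV2 (I₁ I₂ I₃ : ℝ) (R : Fin 3 → ℝ) : Fin 3 → ℝ :=
  fun i => R i / (norm3 R) ^ 3 + 3 * R i / (2 * (norm3 R) ^ 5)
    + 3 * (inertiaApply I₁ I₂ I₃ R) i / (norm3 R) ^ 5
    - 15 * (dot3 R (inertiaApply I₁ I₂ I₃ R)) * R i / (2 * (norm3 R) ^ 7)

/-- `(𝐑, ξ)` is a relative equilibrium pair of the second-order model:
`𝐑 ≠ 0`, `(𝐈 − 𝐑𝐑ᵀ)ξ = αξ` for some `α`, and `∇V₂(𝐑) = −(𝐑·ξ)ξ + |ξ|²𝐑`. -/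
def IsRelEq (I₁ I₂ I₃ : ℝ) (R ξ : Fin 3 → ℝ) : Prop :=
  R ≠ 0 ∧ ∃ α : ℝ,
    (∀ i, (inertiaApply I₁ I₂ I₃ ξ) i - (dot3 R ξ) * R i = α * ξ i) ∧
    (∀ i, gradV2 I₁ I₂ I₃ R i = -(dot3 R ξ) * ξ i + (dot3 ξ ξ) * R i)

/-!
A coordinate axis `e_j` is an eigenvector of `𝐈` with eigenvalue `I_j`, so on it `∇V₂` is radial:
`∇V₂(R e_j) = (1/R³ + (3 − 9 I_j)/(2R⁵)) R e_j = ω² R e_j`. The angular velocity `ω e_k` is another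
eigenvector of `𝐈` and is orthogonal to `R e_j`, which kills the `𝐑·ξ` terms of both conditions.
-/

lemma dot3_self_nonneg (v : Fin 3 → ℝ) : 0 ≤ dot3 v v :=
  add_nonneg (add_nonneg (mul_self_nonneg _) (mul_self_nonneg _)) (mul_self_nonneg _)

lemma norm3_sq (v : Fin 3 → ℝ) : norm3 v ^ 2 = dot3 v v :=
  Real.sq_sqrt (dot3_self_nonneg v)

lemma norm3_pos {v : Fin 3 → ℝ} (hv : v ≠ 0) : 0 < norm3 v := by
  refine Real.sqrt_pos.2 (lt_of_le_of_ne (dot3_self_nonneg v) fun h => hv ?_)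
  unfold dot3 at h
  funext i
  fin_cases i <;> simp only [Fin.zero_eta, Fin.mk_one, Fin.reduceFinMk, Pi.zero_apply] <;>
    nlinarith [sq_nonneg (v 0), sq_nonneg (v 1), sq_nonneg (v 2)]

lemma dot3_smul_e3_smul_e3 (a b : ℝ) (j k : Fin 3) :
    dot3 (a • e3 j) (b • e3 k) = if j = k then a * b else 0 := by
  fin_cases j <;> fin_cases k <;> simp [dot3, e3]

lemma norm3_smul_e3 {R : ℝ} (hR : 0 ≤ R) (j : Fin 3) : norm3 (R • e3 j) = R := by
  rw [norm3, dot3_smul_e3_smul_e3, if_pos rfl, Real.sqrt_mul_self hR]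

lemma smul_e3_ne_zero {c : ℝ} (hc : c ≠ 0) (j : Fin 3) : c • e3 j ≠ 0 := fun h => by
  simpa [e3, hc] using congrFun h j

lemma inertiaApply_smul_e3 (I₁ I₂ I₃ c : ℝ) (j : Fin 3) :
    inertiaApply I₁ I₂ I₃ (c • e3 j) = ![I₁, I₂, I₃] j • (c • e3 j) := by
  funext i
  fin_cases j <;> fin_cases i <;> simp [inertiaApply, e3]

/-- Since `𝐑·𝐈𝐑 = λ R²`, the `𝐈`-terms `3λ/R⁵ − 15λ/(2R⁵)` combine to `−9λ/(2R⁵)`. -/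
lemma gradV2_of_inertiaApply_eq_smul (I₁ I₂ I₃ lam : ℝ) {R : Fin 3 → ℝ} (hR : R ≠ 0)
    (hlam : inertiaApply I₁ I₂ I₃ R = lam • R) :
    gradV2 I₁ I₂ I₃ R
      = (1 / norm3 R ^ 3 + (3 - 9 * lam) / (2 * norm3 R ^ 5)) • R := by
  have hn : norm3 R ≠ 0 := (norm3_pos hR).ne'
  have hdot : dot3 R (lam • R) = lam * norm3 R ^ 2 := by
    rw [norm3_sq]; simp only [dot3, Pi.smul_apply, smul_eq_mul]; ring
  funext i
  simp only [gradV2, hlam, hdot, Pi.smul_apply, smul_eq_mul]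
  field_simp
  ring

lemma isRelEq_of_dot3_eq_zero {I₁ I₂ I₃ α : ℝ} {R ξ : Fin 3 → ℝ} (hR : R ≠ 0)
    (horth : dot3 R ξ = 0) (hξ : inertiaApply I₁ I₂ I₃ ξ = α • ξ)
    (hgrad : gradV2 I₁ I₂ I₃ R = dot3 ξ ξ • R) : IsRelEq I₁ I₂ I₃ R ξ :=
  ⟨hR, α, fun i => by simp [hξ, horth], fun i => by simp [hgrad, horth]⟩

theorem stmt1_general (I₁ I₂ I₃ : ℝ)
    (j k : Fin 3) (hjk : j ≠ k)
    (R ω : ℝ) (hR : 0 < R)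
    (hω : ω ^ 2 = 1 / R ^ 3 + (3 - 9 * ![I₁, I₂, I₃] j) / (2 * R ^ 5)) :
    IsRelEq I₁ I₂ I₃ (R • e3 j) (ω • e3 k) := by
  have hRj : R • e3 j ≠ 0 := smul_e3_ne_zero hR.ne' j
  refine isRelEq_of_dot3_eq_zero hRj (α := ![I₁, I₂, I₃] k) ?_
    (inertiaApply_smul_e3 I₁ I₂ I₃ ω k) ?_
  · rw [dot3_smul_e3_smul_e3, if_neg hjk]
  · rw [gradV2_of_inertiaApply_eq_smul I₁ I₂ I₃ _ hRj (inertiaApply_smul_e3 I₁ I₂ I₃ R j),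
      norm3_smul_e3 hR.le, dot3_smul_e3_smul_e3, if_pos rfl, ← hω, sq]

theorem stmt1 (I₁ I₂ I₃ : ℝ)
    (hI₁ : 0 < I₁) (hI₁' : I₁ < 1 / 2)
    (hI₂ : 0 < I₂) (hI₂' : I₂ < 1 / 2)
    (hI₃ : 0 < I₃) (hI₃' : I₃ < 1 / 2)
    (hsum : I₁ + I₂ + I₃ = 1)
    (j k : Fin 3) (hjk : j ≠ k)
    (R ω : ℝ) (hR : 0 < R)
    (hω : ω ^ 2 = 1 / R ^ 3 + (3 - 9 * ![I₁, I₂, I₃] j) / (2 * R ^ 5)) :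
    IsRelEq I₁ I₂ I₃ (R • e3 j) (ω • e3 k) :=
  stmt1_general I₁ I₂ I₃ j k hjk R ω hR hω
end
end

section
/- Local rigidity of the orthogonal family (no bifurcation at R_crit): assume I₁ > I₃ > I₂, I₁ + I₂ + I₃ = 1, and I₁,I₂,I₃ ∈ (0,1/2). Fix R₂ > 0 and let ξ₁ > 0 be defined by ξ₁² = (2R₂² + 3 − 9I₂)/(2R₂⁵) (the right-hand side is positive since I₂ < 1/3). Then there exists ε > 0 such that every relative equilibrium pair (𝐑, ξ) of the second-order model with |𝐑 − (0, R₂, 0)| < ε and |ξ − (ξ₁, 0, 0)| < ε satisfies 𝐑 = (0, r, 0) and ξ = (ω, 0, 0) for some r > 0 and ω with ω² = (2r² + 3 − 9I₂)/(2r⁵); that is, all nearby relative equilibria lie on the orthogonal family. -/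
noncomputable section

open Real

/-!
Since `∇V₂(𝐑)` is a combination of `𝐑` and `𝐈𝐑`, the force balance reads componentwise
`c(Iᵢ) Rᵢ = −(𝐑·ξ) ξᵢ` for an explicit scalar `c(J)`. On the orthogonal family `𝐑·ξ = 0`,
`c(I₁) = 3(I₁ − I₂)/R⁵ > 0` and `c(I₃) = 3(I₃ − I₂)/R⁵ > 0`; these are open conditions, so they
persist nearby. Under them the eigenvector equation `(𝐈 − 𝐑𝐑ᵀ)ξ = αξ` leaves no room for a tilt
`𝐑·ξ ≠ 0`, and once `𝐑·ξ = 0` the gaps between the moments force `ξ ∥ e₁`, `𝐑 ∥ e₂`, while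
`c(I₂) = 0` is exactly the relation between `ω` and `r`.
-/

/-- The scalar `c(J)` of the componentwise force balance `c(Iᵢ) Rᵢ = −(𝐑·ξ) ξᵢ`. -/
def balanceCoeff (I₁ I₂ I₃ J : ℝ) (R ξ : Fin 3 → ℝ) : ℝ :=
  1 / norm3 R ^ 3 + 3 / (2 * norm3 R ^ 5)
    - 15 * dot3 R (inertiaApply I₁ I₂ I₃ R) / (2 * norm3 R ^ 7) - dot3 ξ ξ + 3 * J / norm3 R ^ 5

lemma abs_le_norm3 (u : Fin 3 → ℝ) (i : Fin 3) : |u i| ≤ norm3 u := by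
  have h : u i ^ 2 ≤ dot3 u u := by
    fin_cases i <;> simp [dot3] <;> nlinarith [sq_nonneg (u 0), sq_nonneg (u 1), sq_nonneg (u 2)]
  calc |u i| = Real.sqrt (u i ^ 2) := (Real.sqrt_sq_eq_abs _).symm
    _ ≤ _ := Real.sqrt_le_sqrt h

lemma dist_le_norm3 (u v : Fin 3 → ℝ) : dist u v ≤ norm3 (u - v) :=
  (dist_pi_le_iff ((abs_nonneg _).trans (abs_le_norm3 _ 0))).2 fun i => by
    simpa only [Real.dist_eq, Pi.sub_apply] using abs_le_norm3 (u - v) i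

lemma norm3_axis (r : ℝ) (hr : 0 ≤ r) : norm3 ![0, r, 0] = r := by
  simp [norm3, dot3, Real.sqrt_mul_self hr]

lemma inertiaApply_apply (I₁ I₂ I₃ : ℝ) (v : Fin 3 → ℝ) (i : Fin 3) :
    inertiaApply I₁ I₂ I₃ v i = ![I₁, I₂, I₃] i * v i := by
  fin_cases i <;> rfl

lemma balanceCoeff_axis (I₁ I₂ I₃ J r ω : ℝ) (hr : 0 < r) :
    balanceCoeff I₁ I₂ I₃ J ![0, r, 0] ![ω, 0, 0]
      = (2 * r ^ 2 + 3 - 9 * I₂) / (2 * r ^ 5) - ω ^ 2 + 3 * (J - I₂) / r ^ 5 := by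
  have hdot : dot3 ![0, r, 0] (inertiaApply I₁ I₂ I₃ ![0, r, 0]) = I₂ * r ^ 2 := by
    simp [dot3, inertiaApply]; ring
  rw [balanceCoeff, norm3_axis r hr.le, hdot]
  simp only [dot3, Matrix.cons_val_zero, Matrix.cons_val_one, Matrix.cons_val_two,
    Matrix.head_cons, Matrix.tail_cons]
  field_simp
  ring

lemma continuousAt_balanceCoeff (I₁ I₂ I₃ J : ℝ) {R ξ : Fin 3 → ℝ} (hR : norm3 R ≠ 0) :
    ContinuousAt (fun P : (Fin 3 → ℝ) × (Fin 3 → ℝ) => balanceCoeff I₁ I₂ I₃ J P.1 P.2) (R, ξ) := by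
  have hnorm : Continuous norm3 := by
    unfold norm3 dot3; fun_prop
  unfold balanceCoeff
  simp only [dot3, inertiaApply_apply]
  fun_prop (disch := simp [hR])

namespace IsRelEq

variable {I₁ I₂ I₃ : ℝ} {R ξ : Fin 3 → ℝ}

lemma balanceCoeff_mul (h : IsRelEq I₁ I₂ I₃ R ξ) (i : Fin 3) :
    balanceCoeff I₁ I₂ I₃ (![I₁, I₂, I₃] i) R ξ * R i = -(dot3 R ξ * ξ i) := by
  obtain ⟨-, -, -, hgrad⟩ := h
  specialize hgrad i
  simp only [gradV2, balanceCoeff, inertiaApply_apply] at hgrad ⊢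
  linear_combination hgrad

lemma exists_eigen (h : IsRelEq I₁ I₂ I₃ R ξ) :
    ∃ α : ℝ, ∀ i, (![I₁, I₂, I₃] i - α) * ξ i = dot3 R ξ * R i := by
  obtain ⟨α, hα, -⟩ := h.2
  refine ⟨α, fun i => ?_⟩
  have := hα i
  rw [inertiaApply_apply] at this
  linear_combination this

/-- Eliminating `R 0` between the components `0` gives `c(I₁)(α − I₁) = (𝐑·ξ)²`, so a tilt
`𝐑·ξ ≠ 0` forces `α > I₁`. Then the components `2` force `R 2 = ξ 2 = 0`, and the components
`0, 1` give `(𝐑·ξ)(c(I₁)(α − I₂) + (α − I₂)(ξ 0)² + c(I₁)(R 1)²) = 0` with a positive bracket. -/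
theorem dot_eq_zero (h : IsRelEq I₁ I₂ I₃ R ξ) (h₂₁ : I₂ < I₁) (h₃₁ : I₃ < I₁)
    (hc₁ : 0 < balanceCoeff I₁ I₂ I₃ I₁ R ξ)
    (hc₃ : dot3 R ξ ^ 2 < (I₁ - I₃) * balanceCoeff I₁ I₂ I₃ I₃ R ξ) (hξ : ξ 0 ≠ 0) :
    dot3 R ξ = 0 := by
  obtain ⟨α, hα⟩ := h.exists_eigen
  have a₀ := hα 0
  have a₁ := hα 1
  have a₂ := hα 2
  have b₀ := h.balanceCoeff_mul 0
  have b₂ := h.balanceCoeff_mul 2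
  simp only [Matrix.cons_val_zero, Matrix.cons_val_one, Matrix.cons_val_two,
    Matrix.head_cons, Matrix.tail_cons] at a₀ a₁ a₂ b₀ b₂
  set s := dot3 R ξ
  set c₁ := balanceCoeff I₁ I₂ I₃ I₁ R ξ
  set c₃ := balanceCoeff I₁ I₂ I₃ I₃ R ξ
  by_contra hs
  have hc₃_pos : 0 < c₃ :=
    pos_of_mul_pos_right ((sq_nonneg s).trans_lt hc₃) (sub_nonneg.2 h₃₁.le)
  have hα_eq : c₁ * (α - I₁) = s ^ 2 := by
    refine mul_right_cancel₀ hξ ?_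
    linear_combination (-c₁) * a₀ - s * b₀
  have hα_gt : I₁ < α := by
    have : 0 < c₁ * (α - I₁) := hα_eq ▸ by positivity
    linarith [pos_of_mul_pos_right this hc₁.le]
  have hξ₂ : ξ 2 = 0 := by
    have hne : c₃ * (α - I₃) - s ^ 2 ≠ 0 := by nlinarith
    refine (mul_eq_zero.1 ?_).resolve_left hne
    linear_combination (-c₃) * a₂ - s * b₂
  have hR₂ : R 2 = 0 := by
    refine (mul_eq_zero.1 ?_).resolve_left hc₃_pos.ne'
    rw [b₂, hξ₂, mul_zero, neg_zero]
  have hs_eq : s = R 0 * ξ 0 + R 1 * ξ 1 := by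
    simp only [s, dot3, hR₂]; ring
  have hbracket : 0 < c₁ * (α - I₂) + (α - I₂) * ξ 0 ^ 2 + c₁ * R 1 ^ 2 := by
    have : 0 < α - I₂ := by linarith
    positivity
  refine hs ((mul_eq_zero.1 ?_).resolve_right hbracket.ne')
  linear_combination ((α - I₂) * ξ 0) * b₀ - (c₁ * R 1) * a₁ + (c₁ * (α - I₂)) * hs_eq

theorem eq_axis_of_dot_eq_zero (h : IsRelEq I₁ I₂ I₃ R ξ) (hs : dot3 R ξ = 0)
    (h₂₁ : I₂ ≠ I₁) (h₃₁ : I₃ ≠ I₁) (hc₁ : balanceCoeff I₁ I₂ I₃ I₁ R ξ ≠ 0)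
    (hc₃ : balanceCoeff I₁ I₂ I₃ I₃ R ξ ≠ 0) (hξ : ξ 0 ≠ 0) (hR : R 1 ≠ 0) :
    R = ![0, R 1, 0] ∧ ξ = ![ξ 0, 0, 0] ∧ balanceCoeff I₁ I₂ I₃ I₂ R ξ = 0 := by
  obtain ⟨α, hα⟩ := h.exists_eigen
  have a₀ := hα 0
  have a₁ := hα 1
  have a₂ := hα 2
  have b₀ := h.balanceCoeff_mul 0
  have b₁ := h.balanceCoeff_mul 1
  have b₂ := h.balanceCoeff_mul 2
  simp only [Matrix.cons_val_zero, Matrix.cons_val_one, Matrix.cons_val_two,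
    Matrix.head_cons, Matrix.tail_cons, hs, zero_mul, neg_zero] at a₀ a₁ a₂ b₀ b₁ b₂
  have hα_eq : α = I₁ := by
    have := (mul_eq_zero.1 a₀).resolve_right hξ
    linarith
  subst hα_eq
  have hξ₁ : ξ 1 = 0 := (mul_eq_zero.1 a₁).resolve_left (sub_ne_zero.2 h₂₁)
  have hξ₂ : ξ 2 = 0 := (mul_eq_zero.1 a₂).resolve_left (sub_ne_zero.2 h₃₁)
  have hR₀ : R 0 = 0 := (mul_eq_zero.1 b₀).resolve_left hc₁
  have hR₂ : R 2 = 0 := (mul_eq_zero.1 b₂).resolve_left hc₃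
  refine ⟨?_, ?_, (mul_eq_zero.1 b₁).resolve_right hR⟩ <;>
    ext i <;> fin_cases i <;> simp [hR₀, hR₂, hξ₁, hξ₂]

end IsRelEq

lemma exists_norm3_lt_of_eventually {p : (Fin 3 → ℝ) × (Fin 3 → ℝ) → Prop} {a b : Fin 3 → ℝ}
    (h : ∀ᶠ P in nhds (a, b), p P) :
    ∃ ε : ℝ, 0 < ε ∧ ∀ R ξ : Fin 3 → ℝ, norm3 (R - a) < ε → norm3 (ξ - b) < ε → p (R, ξ) := by
  obtain ⟨ε, hε, hball⟩ := Metric.eventually_nhds_iff.1 h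
  refine ⟨ε, hε, fun R ξ hR hξ => hball ?_⟩
  rw [Prod.dist_eq]
  exact max_lt ((dist_le_norm3 _ _).trans_lt hR) ((dist_le_norm3 _ _).trans_lt hξ)

lemma eventually_near_axis {I₁ I₂ I₃ R₂ ξ₁ : ℝ} (h₃₁ : I₃ < I₁) (h₂₃ : I₂ < I₃)
    (hR₂ : 0 < R₂) (hξ₁ : 0 < ξ₁)
    (hkep : ξ₁ ^ 2 = (2 * R₂ ^ 2 + 3 - 9 * I₂) / (2 * R₂ ^ 5)) :
    ∀ᶠ P in nhds ((![0, R₂, 0], ![ξ₁, 0, 0]) : (Fin 3 → ℝ) × (Fin 3 → ℝ)),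
      0 < balanceCoeff I₁ I₂ I₃ I₁ P.1 P.2 ∧
      dot3 P.1 P.2 ^ 2 < (I₁ - I₃) * balanceCoeff I₁ I₂ I₃ I₃ P.1 P.2 ∧
      0 < P.2 0 ∧ 0 < P.1 1 := by
  have hc : ∀ J, balanceCoeff I₁ I₂ I₃ J ![0, R₂, 0] ![ξ₁, 0, 0] = 3 * (J - I₂) / R₂ ^ 5 := by
    intro J
    rw [balanceCoeff_axis _ _ _ _ _ _ hR₂, hkep]
    ring
  have hs : dot3 ![0, R₂, 0] ![ξ₁, 0, 0] = 0 := by simp [dot3]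
  have hnorm : norm3 ![0, R₂, 0] ≠ 0 := by rw [norm3_axis R₂ hR₂.le]; exact hR₂.ne'
  have hdot : Continuous fun P : (Fin 3 → ℝ) × (Fin 3 → ℝ) => dot3 P.1 P.2 := by
    unfold dot3; fun_prop
  refine (continuousAt_const.eventually_lt (continuousAt_balanceCoeff _ _ _ _ hnorm) ?_).and <|
    ((hdot.continuousAt.pow 2).eventually_lt
      (continuousAt_const.mul (continuousAt_balanceCoeff _ _ _ _ hnorm)) ?_).and <|
    (continuousAt_const.eventually_lt (by fun_prop) ?_).and
    (continuousAt_const.eventually_lt (by fun_prop) ?_)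
  · rw [hc]; exact div_pos (by linarith) (by positivity)
  · simp only [Pi.pow_apply, Pi.mul_apply]
    rw [hc, hs, zero_pow two_ne_zero]
    exact mul_pos (by linarith) (div_pos (by linarith) (by positivity))
  · simpa using hξ₁
  · simpa using hR₂

theorem stmt7_general (I₁ I₂ I₃ : ℝ)
    (hL1 : I₁ > I₃) (hL2 : I₃ > I₂)
    (R₂ ξ₁ : ℝ) (hR₂ : 0 < R₂) (hξ₁ : 0 < ξ₁)
    (hkep : ξ₁ ^ 2 = (2 * R₂ ^ 2 + 3 - 9 * I₂) / (2 * R₂ ^ 5)) :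
    ∃ ε : ℝ, 0 < ε ∧ ∀ (Rv ξv : Fin 3 → ℝ),
      IsRelEq I₁ I₂ I₃ Rv ξv →
      norm3 (Rv - ![0, R₂, 0]) < ε →
      norm3 (ξv - ![ξ₁, 0, 0]) < ε →
      ∃ r ω : ℝ, 0 < r ∧ Rv = ![0, r, 0] ∧ ξv = ![ω, 0, 0] ∧
        ω ^ 2 = (2 * r ^ 2 + 3 - 9 * I₂) / (2 * r ^ 5) := by
  obtain ⟨ε, hε, hnear⟩ :=
    exists_norm3_lt_of_eventually (eventually_near_axis hL1 hL2 hR₂ hξ₁ hkep)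
  refine ⟨ε, hε, fun Rv ξv hre hRv hξv => ?_⟩
  obtain ⟨hc₁, hc₃, hξ₀, hR₁⟩ := hnear Rv ξv hRv hξv
  dsimp only at hc₁ hc₃ hξ₀ hR₁
  have hc₃_pos : 0 < balanceCoeff I₁ I₂ I₃ I₃ Rv ξv :=
    pos_of_mul_pos_right ((sq_nonneg _).trans_lt hc₃) (sub_nonneg.2 hL1.le)
  have hs := hre.dot_eq_zero (hL2.trans hL1) hL1 hc₁ hc₃ hξ₀.ne'
  obtain ⟨hRv_eq, hξv_eq, hc₂⟩ := hre.eq_axis_of_dot_eq_zero hs (hL2.trans hL1).ne hL1.ne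
    hc₁.ne' hc₃_pos.ne' hξ₀.ne' hR₁.ne'
  refine ⟨Rv 1, ξv 0, hR₁, hRv_eq, hξv_eq, ?_⟩
  rw [hRv_eq, hξv_eq, balanceCoeff_axis _ _ _ _ _ _ hR₁, sub_self, mul_zero, zero_div,
    add_zero, sub_eq_zero] at hc₂
  exact hc₂.symm

theorem stmt7 (I₁ I₂ I₃ : ℝ)
    (hI₁ : 0 < I₁) (hI₁' : I₁ < 1 / 2)
    (hI₂ : 0 < I₂) (hI₂' : I₂ < 1 / 2)
    (hI₃ : 0 < I₃) (hI₃' : I₃ < 1 / 2)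
    (hsum : I₁ + I₂ + I₃ = 1)
    (hL1 : I₁ > I₃) (hL2 : I₃ > I₂)
    (R₂ ξ₁ : ℝ) (hR₂ : 0 < R₂) (hξ₁ : 0 < ξ₁)
    (hkep : ξ₁ ^ 2 = (2 * R₂ ^ 2 + 3 - 9 * I₂) / (2 * R₂ ^ 5)) :
    ∃ ε : ℝ, 0 < ε ∧ ∀ (Rv ξv : Fin 3 → ℝ),
      IsRelEq I₁ I₂ I₃ Rv ξv →
      norm3 (Rv - ![0, R₂, 0]) < ε →
      norm3 (ξv - ![ξ₁, 0, 0]) < ε →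
      ∃ r ω : ℝ, 0 < r ∧ Rv = ![0, r, 0] ∧ ξv = ![ω, 0, 0] ∧
        ω ^ 2 = (2 * r ^ 2 + 3 - 9 * I₂) / (2 * r ^ 5) :=
  stmt7_general I₁ I₂ I₃ hL1 hL2 R₂ ξ₁ hR₂ hξ₁ hkep
end
end

section
/- Asymptotic offset of the conical family: fix ψ with sin ψ cos ψ ≠ 0, and for each sufficiently large R > 0 let (𝐑(R), ξ(R), η(R)) be the conical configuration with 𝐑(R) = R(cos ψ, sin ψ, 0), ξ(R) = (ξ₁(R), λ(R)R sin ψ, 0), where λ(R) > 0 satisfies λ² = cos²ψ (2R² + (9−15cos²ψ)(I₁−I₂))² / (2R⁷ sin²ψ (2R² + (3−9cos²ψ)(I₁−I₂))), η(R) = (cos ψ (I₂−I₁)/(2 sin²ψ λ I₁ R⁶)) · ((15cos²ψ − 9)(I₁−I₂) − 8R² + 6R²cos²ψ + 2λ²R⁷sin²ψ), and ξ₁(R) = 3cos ψ/(λR⁴) + I₁η(R)/(I₂−I₁). Then the squared sine of the offset angle, sin²ϰ(R) = (ξ(R)·𝐑(R))²/(|ξ(R)|² |𝐑(R)|²), satisfies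 lim_{R→∞} R⁴ sin²ϰ(R) = 9(I₂−I₁)² sin²ψ cos²ψ. -/
noncomputable section

open Real

/-- The cross product on `ℝ³`. -/
def cross3 (u v : Fin 3 → ℝ) : Fin 3 → ℝ :=
  ![u 1 * v 2 - u 2 * v 1, u 2 * v 0 - u 0 * v 2, u 0 * v 1 - u 1 * v 0]

/-- `(𝐑, ξ, η)` is an axisymmetric relative equilibrium triple for the inertia tensor
`𝐈 = diag (I₁, I₂, I₂)`: `𝐑 ≠ 0`, `ξ × (𝐈ξ − (𝐑·ξ)𝐑 − I₁ η e₁) = 0` and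
`∇V₂(𝐑) = −(𝐑·ξ)ξ + |ξ|²𝐑`. -/
def IsAxiRelEq (I₁ I₂ : ℝ) (R ξ : Fin 3 → ℝ) (η : ℝ) : Prop :=
  R ≠ 0 ∧
  cross3 ξ (fun i => (inertiaApply I₁ I₂ I₂ ξ) i - (dot3 R ξ) * R i - I₁ * η * e3 0 i) = 0 ∧
  (∀ i, gradV2 I₁ I₂ I₂ R i = -(dot3 R ξ) * ξ i + (dot3 ξ ξ) * R i)

/-!
Write `A = 2R² + (9 − 15cos²ψ)(I₁ − I₂)` and `B = 2R² + (3 − 9cos²ψ)(I₁ − I₂)` for the two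
factors in the formula for `λ²`, and `a = A/R²`, `b = B/R²`, both tending to `2`. The squared
sine of the angle between two vectors does not change when they are rescaled, and the
rescaled vectors `R⁴λ ξ` and `𝐑/R = (cos ψ, sin ψ, 0)` depend on `R` only through `a` and `b`;
`R⁴λ ξ` tends to `(−cos ψ, cos²ψ / sin ψ, 0)`, of squared length `cot²ψ`. The leading terms of
the dot product cancel: `R⁴λ ξ · 𝐑/R = cos²ψ a (a − b) / (2 sin²ψ b)`, and
`a − b = 6 sin²ψ (I₁ − I₂)/R²`. Hence `R² (R⁴λ ξ · 𝐑/R) → 3cos²ψ (I₁ − I₂)`, and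
`R⁴ sin²ϰ → 9cos⁴ψ (I₁ − I₂)² tan²ψ`.
-/

open Filter Topology

lemma dot3_smul_left (k : ℝ) (u v : Fin 3 → ℝ) : dot3 (k • u) v = k * dot3 u v := by
  simp only [dot3, Pi.smul_apply, smul_eq_mul]; ring

lemma dot3_smul_right (k : ℝ) (u v : Fin 3 → ℝ) : dot3 u (k • v) = k * dot3 u v := by
  simp only [dot3, Pi.smul_apply, smul_eq_mul]; ring

lemma dot3_sq_div_smul_smul {k m : ℝ} (hk : k ≠ 0) (hm : m ≠ 0) (u v : Fin 3 → ℝ) :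
    dot3 (k • u) (m • v) ^ 2 / (dot3 (k • u) (k • u) * dot3 (m • v) (m • v)) =
      dot3 u v ^ 2 / (dot3 u u * dot3 v v) := by
  simp only [dot3_smul_left, dot3_smul_right]
  rw [show (m * (k * dot3 u v)) ^ 2 = (k * m) ^ 2 * dot3 u v ^ 2 by ring,
    show k * (k * dot3 u u) * (m * (m * dot3 v v)) = (k * m) ^ 2 * (dot3 u u * dot3 v v) by ring,
    mul_div_mul_left _ _ (by positivity)]

def conicalA (I₁ I₂ ψ R : ℝ) : ℝ := 2 + (9 - 15 * cos ψ ^ 2) * (I₁ - I₂) / R ^ 2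

def conicalB (I₁ I₂ ψ R : ℝ) : ℝ := 2 + (3 - 9 * cos ψ ^ 2) * (I₁ - I₂) / R ^ 2

def rescaledXi (ψ a b : ℝ) : Fin 3 → ℝ :=
  ![cos ψ * a * (cos ψ ^ 2 * a - b) / (2 * sin ψ ^ 2 * b), cos ψ ^ 2 * a ^ 2 / (2 * sin ψ * b), 0]

lemma tendsto_two_add_div_sq (k : ℝ) : Tendsto (fun R : ℝ => 2 + k / R ^ 2) atTop (𝓝 2) := by
  simpa using (tendsto_const_nhds (x := k)).div_atTop (tendsto_pow_atTop two_ne_zero) |>.const_add 2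

lemma conicalA_sub_conicalB (I₁ I₂ ψ R : ℝ) :
    conicalA I₁ I₂ ψ R - conicalB I₁ I₂ ψ R = 6 * sin ψ ^ 2 * (I₁ - I₂) / R ^ 2 := by
  simp only [conicalA, conicalB, sin_sq]; ring

lemma dot3_rescaledXi_axis {ψ : ℝ} (hs : sin ψ ≠ 0) {a b : ℝ} (hb : b ≠ 0) :
    dot3 (rescaledXi ψ a b) ![cos ψ, sin ψ, 0] = cos ψ ^ 2 * a * (a - b) / (2 * sin ψ ^ 2 * b) := by
  simp only [dot3, rescaledXi, Fin.isValue, Matrix.cons_val_zero, Matrix.cons_val_one,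
    Matrix.cons_val, mul_zero, add_zero]
  field_simp
  linear_combination (cos ψ ^ 2 * a ^ 2) * sin_sq_add_cos_sq ψ

section ConicalFamily

variable {I₁ I₂ ψ R l η ξ₁ : ℝ}

lemma smul_conicalXi_eq (hR : R ≠ 0) (hl : l ≠ 0) (hs : sin ψ ≠ 0) (hI₁ : I₁ ≠ 0)
    (hne : I₁ ≠ I₂) (hb : conicalB I₁ I₂ ψ R ≠ 0)
    (hlsq : l ^ 2 = cos ψ ^ 2 * (2 * R ^ 2 + (9 - 15 * cos ψ ^ 2) * (I₁ - I₂)) ^ 2 /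
        (2 * R ^ 7 * sin ψ ^ 2 * (2 * R ^ 2 + (3 - 9 * cos ψ ^ 2) * (I₁ - I₂))))
    (hη : η = (cos ψ * (I₂ - I₁) / (2 * sin ψ ^ 2 * l * I₁ * R ^ 6)) *
        ((15 * cos ψ ^ 2 - 9) * (I₁ - I₂) - 8 * R ^ 2
          + 6 * R ^ 2 * cos ψ ^ 2 + 2 * l ^ 2 * R ^ 7 * sin ψ ^ 2))
    (hξ₁ : ξ₁ = 3 * cos ψ / (l * R ^ 4) + I₁ * η / (I₂ - I₁)) :
    (R ^ 4 * l) • ![ξ₁, l * R * sin ψ, 0] =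
      rescaledXi ψ (conicalA I₁ I₂ ψ R) (conicalB I₁ I₂ ψ R) := by
  set a := conicalA I₁ I₂ ψ R with ha
  set b := conicalB I₁ I₂ ψ R with hb'
  have hA : 2 * R ^ 2 + (9 - 15 * cos ψ ^ 2) * (I₁ - I₂) = R ^ 2 * a := by
    rw [ha, conicalA]; field_simp
  have hB : 2 * R ^ 2 + (3 - 9 * cos ψ ^ 2) * (I₁ - I₂) = R ^ 2 * b := by
    rw [hb', conicalB]; field_simp
  rw [hA, hB] at hlsq
  have hl2 : l ^ 2 * R ^ 5 = cos ψ ^ 2 * a ^ 2 / (2 * sin ψ ^ 2 * b) := by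
    rw [hlsq]; field_simp
  have hlξ₁ : R ^ 4 * l * ξ₁ = 3 * cos ψ + cos ψ / (2 * sin ψ ^ 2 * R ^ 2) *
      ((15 * cos ψ ^ 2 - 9) * (I₁ - I₂) - 8 * R ^ 2 + 6 * R ^ 2 * cos ψ ^ 2
        + 2 * (l ^ 2 * R ^ 5) * R ^ 2 * sin ψ ^ 2) := by
    have hne' : I₂ - I₁ ≠ 0 := sub_ne_zero.mpr hne.symm
    rw [hξ₁, hη]; field_simp
  ext i
  fin_cases i
  · simp only [rescaledXi, Fin.zero_eta, Pi.smul_apply, Matrix.cons_val_zero, smul_eq_mul]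
    rw [hlξ₁, hl2]
    field_simp
    linear_combination (-cos ψ * b) * hA + (6 * cos ψ * R ^ 2 * b) * sin_sq_add_cos_sq ψ
  · simp only [rescaledXi, Fin.mk_one, Pi.smul_apply, Matrix.cons_val_one, Matrix.cons_val_zero,
      smul_eq_mul]
    rw [show R ^ 4 * l * (l * R * sin ψ) = l ^ 2 * R ^ 5 * sin ψ by ring, hl2]
    field_simp
  · simp [rescaledXi]

lemma conical_offset_sq_eq {ξ : Fin 3 → ℝ} {k : ℝ} (hR : R ≠ 0) (hk : k ≠ 0) (hs : sin ψ ≠ 0)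
    (hb : conicalB I₁ I₂ ψ R ≠ 0)
    (hξ : k • ξ = rescaledXi ψ (conicalA I₁ I₂ ψ R) (conicalB I₁ I₂ ψ R)) :
    R ^ 4 * dot3 ξ ![R * cos ψ, R * sin ψ, 0] ^ 2 /
        (dot3 ξ ξ * dot3 ![R * cos ψ, R * sin ψ, 0] ![R * cos ψ, R * sin ψ, 0]) =
      (3 * cos ψ ^ 2 * (I₁ - I₂) * conicalA I₁ I₂ ψ R / conicalB I₁ I₂ ψ R) ^ 2 /
        dot3 (rescaledXi ψ (conicalA I₁ I₂ ψ R) (conicalB I₁ I₂ ψ R))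
          (rescaledXi ψ (conicalA I₁ I₂ ψ R) (conicalB I₁ I₂ ψ R)) := by
  have hR' : R⁻¹ • ![R * cos ψ, R * sin ψ, 0] = ![cos ψ, sin ψ, 0] := by
    ext i; fin_cases i <;> simp [hR]
  have hunit : dot3 ![cos ψ, sin ψ, 0] ![cos ψ, sin ψ, 0] = 1 := by
    simp only [dot3, Fin.isValue, Matrix.cons_val_zero, Matrix.cons_val_one, Matrix.cons_val,
      mul_zero, add_zero]
    linear_combination cos_sq_add_sin_sq ψ
  rw [mul_div_assoc, ← dot3_sq_div_smul_smul hk (inv_ne_zero hR), hξ, hR', hunit, mul_one,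
    dot3_rescaledXi_axis hs hb, conicalA_sub_conicalB, ← mul_div_assoc]
  congr 1
  field_simp
  ring

lemma tendsto_rescaledXi (hs : sin ψ ≠ 0) {α : Type*} {F : Filter α} {a b : α → ℝ} {a₀ b₀ : ℝ}
    (ha : Tendsto a F (𝓝 a₀)) (hb : Tendsto b F (𝓝 b₀)) (hb₀ : b₀ ≠ 0) :
    Tendsto (fun x => rescaledXi ψ (a x) (b x)) F (𝓝 (rescaledXi ψ a₀ b₀)) := by
  have hcont : ContinuousAt (fun p : ℝ × ℝ => rescaledXi ψ p.1 p.2) (a₀, b₀) := by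
    refine continuousAt_pi.2 fun i => ?_
    fin_cases i <;>
      simp only [rescaledXi, Fin.zero_eta, Fin.mk_one, Fin.reduceFinMk, Fin.isValue,
        Matrix.cons_val_zero, Matrix.cons_val_one, Matrix.cons_val] <;>
      fun_prop (disch := simp [hs, hb₀])
  exact hcont.tendsto.comp (ha.prodMk_nhds hb)

lemma dot3_rescaledXi_two_two (hs : sin ψ ≠ 0) :
    dot3 (rescaledXi ψ 2 2) (rescaledXi ψ 2 2) = cos ψ ^ 2 / sin ψ ^ 2 := by
  simp only [dot3, rescaledXi, Fin.isValue, Matrix.cons_val_zero, Matrix.cons_val_one,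
    Matrix.cons_val, mul_zero, add_zero]
  field_simp
  linear_combination cos ψ ^ 2 * (cos ψ ^ 2 - 1) * sin_sq_add_cos_sq ψ

lemma tendsto_conical_offset_sq (hs : sin ψ ≠ 0) (hc : cos ψ ≠ 0) :
    Tendsto (fun R => (3 * cos ψ ^ 2 * (I₁ - I₂) * conicalA I₁ I₂ ψ R / conicalB I₁ I₂ ψ R) ^ 2 /
        dot3 (rescaledXi ψ (conicalA I₁ I₂ ψ R) (conicalB I₁ I₂ ψ R))
          (rescaledXi ψ (conicalA I₁ I₂ ψ R) (conicalB I₁ I₂ ψ R)))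
      atTop (𝓝 (9 * (I₂ - I₁) ^ 2 * sin ψ ^ 2 * cos ψ ^ 2)) := by
  have ha : Tendsto (conicalA I₁ I₂ ψ) atTop (𝓝 2) := tendsto_two_add_div_sq _
  have hb : Tendsto (conicalB I₁ I₂ ψ) atTop (𝓝 2) := tendsto_two_add_div_sq _
  have hΞ := tendsto_rescaledXi hs ha hb two_ne_zero
  have hdot : Continuous fun u : Fin 3 → ℝ => dot3 u u := by unfold dot3; fun_prop
  have key := (((ha.const_mul (3 * cos ψ ^ 2 * (I₁ - I₂))).div hb two_ne_zero).pow 2).div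
    ((hdot.tendsto _).comp hΞ) (by rw [dot3_rescaledXi_two_two hs]; positivity)
  rw [dot3_rescaledXi_two_two hs,
    show (3 * cos ψ ^ 2 * (I₁ - I₂) * 2 / 2) ^ 2 / (cos ψ ^ 2 / sin ψ ^ 2) =
      9 * (I₂ - I₁) ^ 2 * sin ψ ^ 2 * cos ψ ^ 2 by field_simp; ring] at key
  exact key

end ConicalFamily

open Filter in
theorem stmt14_general (I₁ I₂ : ℝ)
    (hI₁ : 0 < I₁) (hne : I₁ ≠ I₂)
    (ψ : ℝ) (hψ : Real.sin ψ * Real.cos ψ ≠ 0)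
    (lam η ξ₁ : ℝ → ℝ)
    (hlam : ∀ᶠ R in atTop, 0 < lam R ∧
      (lam R) ^ 2 = (Real.cos ψ) ^ 2
          * (2 * R ^ 2 + (9 - 15 * (Real.cos ψ) ^ 2) * (I₁ - I₂)) ^ 2 /
        (2 * R ^ 7 * (Real.sin ψ) ^ 2
          * (2 * R ^ 2 + (3 - 9 * (Real.cos ψ) ^ 2) * (I₁ - I₂))))
    (hη : ∀ᶠ R in atTop,
      η R = (Real.cos ψ * (I₂ - I₁) / (2 * (Real.sin ψ) ^ 2 * lam R * I₁ * R ^ 6)) *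
        ((15 * (Real.cos ψ) ^ 2 - 9) * (I₁ - I₂) - 8 * R ^ 2
          + 6 * R ^ 2 * (Real.cos ψ) ^ 2 + 2 * (lam R) ^ 2 * R ^ 7 * (Real.sin ψ) ^ 2))
    (hξ₁ : ∀ᶠ R in atTop,
      ξ₁ R = 3 * Real.cos ψ / (lam R * R ^ 4) + I₁ * η R / (I₂ - I₁)) :
    Tendsto (fun R : ℝ =>
        R ^ 4 * (dot3 ![ξ₁ R, lam R * R * Real.sin ψ, 0]
            ![R * Real.cos ψ, R * Real.sin ψ, 0]) ^ 2 /
          (dot3 ![ξ₁ R, lam R * R * Real.sin ψ, 0] ![ξ₁ R, lam R * R * Real.sin ψ, 0] *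
            dot3 ![R * Real.cos ψ, R * Real.sin ψ, 0] ![R * Real.cos ψ, R * Real.sin ψ, 0]))
      atTop
      (nhds (9 * (I₂ - I₁) ^ 2 * (Real.sin ψ) ^ 2 * (Real.cos ψ) ^ 2)) := by
  obtain ⟨hs, hc⟩ := mul_ne_zero_iff.mp hψ
  have hb : ∀ᶠ R in atTop, conicalB I₁ I₂ ψ R ≠ 0 :=
    (tendsto_two_add_div_sq _).eventually_ne two_ne_zero
  refine (tendsto_conical_offset_sq hs hc).congr' ?_
  filter_upwards [hlam, hη, hξ₁, hb, eventually_ne_atTop 0] with R ⟨hl, hlsq⟩ hηR hξ₁R hbR hR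
  have hξ := smul_conicalXi_eq hR hl.ne' hs hI₁.ne' hne hbR hlsq hηR hξ₁R
  exact (conical_offset_sq_eq hR (mul_ne_zero (pow_ne_zero 4 hR) hl.ne') hs hbR hξ).symm

open Filter in
theorem stmt14 (I₁ I₂ : ℝ)
    (hI₁ : 0 < I₁) (hI₂ : 0 < I₂) (hne : I₁ ≠ I₂) (hsum : I₁ + 2 * I₂ = 1)
    (ψ : ℝ) (hψ : Real.sin ψ * Real.cos ψ ≠ 0)
    (lam η ξ₁ : ℝ → ℝ)
    (hlam : ∀ᶠ R in atTop, 0 < lam R ∧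
      (lam R) ^ 2 = (Real.cos ψ) ^ 2
          * (2 * R ^ 2 + (9 - 15 * (Real.cos ψ) ^ 2) * (I₁ - I₂)) ^ 2 /
        (2 * R ^ 7 * (Real.sin ψ) ^ 2
          * (2 * R ^ 2 + (3 - 9 * (Real.cos ψ) ^ 2) * (I₁ - I₂))))
    (hη : ∀ᶠ R in atTop,
      η R = (Real.cos ψ * (I₂ - I₁) / (2 * (Real.sin ψ) ^ 2 * lam R * I₁ * R ^ 6)) *
        ((15 * (Real.cos ψ) ^ 2 - 9) * (I₁ - I₂) - 8 * R ^ 2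
          + 6 * R ^ 2 * (Real.cos ψ) ^ 2 + 2 * (lam R) ^ 2 * R ^ 7 * (Real.sin ψ) ^ 2))
    (hξ₁ : ∀ᶠ R in atTop,
      ξ₁ R = 3 * Real.cos ψ / (lam R * R ^ 4) + I₁ * η R / (I₂ - I₁)) :
    Tendsto (fun R : ℝ =>
        R ^ 4 * (dot3 ![ξ₁ R, lam R * R * Real.sin ψ, 0]
            ![R * Real.cos ψ, R * Real.sin ψ, 0]) ^ 2 /
          (dot3 ![ξ₁ R, lam R * R * Real.sin ψ, 0] ![ξ₁ R, lam R * R * Real.sin ψ, 0] *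
            dot3 ![R * Real.cos ψ, R * Real.sin ψ, 0] ![R * Real.cos ψ, R * Real.sin ψ, 0]))
      atTop
      (nhds (9 * (I₂ - I₁) ^ 2 * (Real.sin ψ) ^ 2 * (Real.cos ψ) ^ 2)) :=
  stmt14_general I₁ I₂ hI₁ hne ψ hψ lam η ξ₁ hlam hη hξ₁
end
end
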